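/- Suppose G and G' are L-sparse shuffle graphs on {1,…,N}. Then f_{G,G'} ≤ (L!)^{|E(G,G')|}. -/

import Mathlib

/-!
Let `Y_G` be the Young subgroup of the permutations preserving every component of `G`. The
permutations `π` with `π^G = σ` form the coset `σ Y_G` if `σ` is increasing on every component
of `G`, and there are none otherwise, so `f_{G,σ} = [σ increasing on the components of G] |Y_G|`.
Being increasing on the components of `G` and of `G'` means being increasing on those of
`G ∪ G'`, and `|Y_G| |Y_{G'}| ≤ |Y_{G ∪ G'}| |Y_{G ∩ G'}|` because `Y_G, Y_{G'} ≤ Y_{G ∪ G'}`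
and `Y_G ∩ Y_{G'} = Y_{G ∩ G'}`. As the fibres of `π ↦ π^G` are disjoint,
`∑_σ f_{G ∪ G',σ} ≤ N!`, so `f_{G,G'} ≤ |Y_{G ∩ G'}|`. Sparsity bounds the components of `G`,
hence of `G ∩ G'`, by `L` vertices, and adding an edge multiplies `|Y|` by at most the size of
the new component, so `|Y_{G ∩ G'}| ≤ L^{|E(G,G')|} ≤ (L!)^{|E(G,G')|}`.
-/
open Finset

namespace RiffleShuffle

/-- The connected component of the vertex `v` in the shuffle graph on `{0,…,N-1}` whose edge
set is `D` (edges being recorded as consecutive pairs `(i, i+1)`): `w` lies in the component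
of `v` iff every consecutive edge between `v` and `w` belongs to `D`. -/
def comp {N : ℕ} (D : Finset (Fin N × Fin N)) (v : Fin N) : Finset (Fin N) :=
  univ.filter (fun w => ∀ e : Fin N × Fin N, (e.2 : ℕ) = (e.1 : ℕ) + 1 →
    min v w ≤ e.1 → e.2 ≤ max v w → e ∈ D)

/-- The set of connected components of a shuffle graph. -/
def comps {N : ℕ} (D : Finset (Fin N × Fin N)) : Finset (Finset (Fin N)) :=
  univ.image (comp D)

/-- `π^G`: the function obtained from `π` by rearranging, within each connected component of
the shuffle graph with edge set `D`, the values of `π` into increasing order.  The value at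
`i` is the `r`-th smallest value of `π` on the component of `i`, where `r` is the rank of `i`
inside its component. -/
def permG {N : ℕ} (D : Finset (Fin N × Fin N)) (π : Equiv.Perm (Fin N)) : Fin N → Fin N :=
  fun i => (Finset.sort ((comp D i).image π) (· ≤ ·)).getD (((comp D i).filter (· < i)).card) i

/-- `f_{G,σ} = N! ⬝ P[π^G = σ]` for `π` uniform, i.e. the number of `π` with `π^G = σ`. -/
def fG {N : ℕ} (D : Finset (Fin N × Fin N)) (σ : Equiv.Perm (Fin N)) : ℝ :=
  ((univ.filter (fun π : Equiv.Perm (Fin N) => permG D π = ⇑σ)).card : ℝ)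

/-- `f_{G,G'} = E_σ [f_{G,σ} ⬝ f_{G',σ}]` for a uniformly random permutation `σ`. -/
noncomputable def fGG {N : ℕ} (D D' : Finset (Fin N × Fin N)) : ℝ :=
  (∑ σ : Equiv.Perm (Fin N), fG D σ * fG D' σ) / (Nat.factorial N : ℝ)

/-- A shuffle graph with edge set `D` is `L`-sparse if every window of `L` consecutive
vertices `{i, …, i+L-1}` contains at most `L/3` of its edges. -/
def LSparse {N : ℕ} (L : ℕ) (D : Finset (Fin N × Fin N)) : Prop :=
  ∀ i : ℕ, ((D.filter (fun e => i ≤ (e.1 : ℕ) ∧ (e.2 : ℕ) ≤ i + L - 1)).card : ℝ) ≤ (L : ℝ) / 3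

end RiffleShuffle

theorem Subgroup.card_mul_card_le_card_mul_card_inf {G : Type*} [Group G] [Finite G]
    {H K L : Subgroup G} (hH : H ≤ L) (hK : K ≤ L) :
    Nat.card H * Nat.card K ≤ Nat.card L * Nat.card ↥(H ⊓ K) := by
  have card_mul_relIndex : ∀ X : Subgroup G, X ≤ L → Nat.card X * X.relIndex L = Nat.card L :=
    fun X hX => by
      rw [← Nat.card_congr (Subgroup.subgroupOfEquivOfLe hX).toEquiv]
      exact (X.subgroupOf L).card_mul_index
  have hpos : 0 < (H ⊓ K).relIndex L :=
    Nat.pos_of_ne_zero fun h0 => Nat.card_pos.ne' <| by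
      simpa [h0] using (card_mul_relIndex (H ⊓ K) (inf_le_left.trans hH)).symm
  refine Nat.le_of_mul_le_mul_right ?_ hpos
  calc Nat.card H * Nat.card K * (H ⊓ K).relIndex L
      ≤ Nat.card H * Nat.card K * (H.relIndex L * K.relIndex L) := by
        gcongr; exact Subgroup.relIndex_inf_le
    _ = (Nat.card H * H.relIndex L) * (Nat.card K * K.relIndex L) := by ring
    _ = Nat.card L * Nat.card L := by rw [card_mul_relIndex H hH, card_mul_relIndex K hK]
    _ = Nat.card L * Nat.card ↥(H ⊓ K) * (H ⊓ K).relIndex L := by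
        rw [mul_assoc, card_mul_relIndex _ (inf_le_left.trans hH)]

theorem Finset.getElem_sort_card_filter_lt {α : Type*} [LinearOrder α] {s : Finset α} {x : α}
    (hx : x ∈ s) (h : #(s.filter (· < x)) < (s.sort (· ≤ ·)).length) :
    (s.sort (· ≤ ·))[#(s.filter (· < x))] = x := by
  set f := s.orderEmbOfFin rfl
  obtain ⟨j, rfl⟩ : x ∈ Set.range f := by rwa [Finset.range_orderEmbOfFin]
  have hrank : #(s.filter (· < f j)) = j := by
    have hmem : ∀ y, y ∈ s ↔ ∃ i, f i = y := fun y => by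
      rw [← Finset.mem_coe, ← Finset.range_orderEmbOfFin s rfl]; rfl
    have : s.filter (· < f j) = (Finset.Iio j).map f.toEmbedding := by
      ext y
      simp only [Finset.mem_filter, hmem, Finset.mem_map, Finset.mem_Iio]
      constructor
      · rintro ⟨⟨i, rfl⟩, hi⟩
        exact ⟨i, f.lt_iff_lt.mp hi, rfl⟩
      · rintro ⟨i, hi, rfl⟩
        exact ⟨⟨i, rfl⟩, f.lt_iff_lt.mpr hi⟩
    rw [this, Finset.card_map, Fin.card_Iio]
  simp only [hrank]
  rfl

namespace RiffleShuffle

variable {N : ℕ} {D D' E : Finset (Fin N × Fin N)}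

theorem mem_comp {v w : Fin N} :
    w ∈ comp E v ↔ ∀ e : Fin N × Fin N, (e.2 : ℕ) = e.1 + 1 →
      min (v : ℕ) w ≤ e.1 → (e.2 : ℕ) ≤ max (v : ℕ) w → e ∈ E := by
  simp only [comp, mem_filter, mem_univ, true_and, Fin.le_def, Fin.coe_min, Fin.coe_max]

theorem mem_comp_self (E : Finset (Fin N × Fin N)) (v : Fin N) : v ∈ comp E v :=
  mem_comp.2 fun _ _ _ _ => by omega

theorem mem_comp_comm {v w : Fin N} : w ∈ comp E v ↔ v ∈ comp E w := by
  simp only [mem_comp, min_comm, max_comm]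

theorem mem_comp_trans {u v w : Fin N} (huv : v ∈ comp E u) (hvw : w ∈ comp E v) :
    w ∈ comp E u := by
  rw [mem_comp] at huv hvw ⊢
  intro e he hmin hmax
  by_cases h : min (u : ℕ) v ≤ e.1 ∧ (e.2 : ℕ) ≤ max (u : ℕ) v
  · exact huv e he h.1 h.2
  · exact hvw e he (by omega) (by omega)

theorem comp_eq_of_mem {v w : Fin N} (h : w ∈ comp E v) : comp E w = comp E v := by
  ext x
  exact ⟨mem_comp_trans h, mem_comp_trans (mem_comp_comm.1 h)⟩

theorem mem_comp_of_le_of_le {v w c : Fin N} (h : w ∈ comp E v) (h₁ : min (v : ℕ) w ≤ c)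
    (h₂ : (c : ℕ) ≤ max (v : ℕ) w) : c ∈ comp E v := by
  rw [mem_comp] at h ⊢
  exact fun e he hmin hmax => h e he (by omega) (by omega)

theorem mk_mem_of_mem_comp {v a b : Fin N} (ha : a ∈ comp E v) (hb : b ∈ comp E v)
    (hab : (b : ℕ) = a + 1) : (a, b) ∈ E :=
  mem_comp.1 (mem_comp_trans (mem_comp_comm.1 ha) hb) (a, b) hab (by dsimp only; omega)
    (by dsimp only; omega)

theorem mem_comp_of_mem {a b : Fin N} (h : (a, b) ∈ E) (hab : (b : ℕ) = a + 1) :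
    b ∈ comp E a := by
  refine mem_comp.2 fun e he hmin hmax => ?_
  obtain rfl : e = (a, b) :=
    Prod.ext (Fin.ext (by dsimp only; omega)) (Fin.ext (by dsimp only; omega))
  exact h

theorem comp_mono (h : D ⊆ E) (v : Fin N) : comp D v ⊆ comp E v :=
  fun _ hw => mem_comp.2 fun e he hmin hmax => h (mem_comp.1 hw e he hmin hmax)

theorem comp_inter (v : Fin N) : comp (D ∩ D') v = comp D v ∩ comp D' v := by
  ext w
  simp only [Finset.mem_inter, mem_comp]
  exact ⟨fun h => ⟨fun e h₁ h₂ h₃ => (h e h₁ h₂ h₃).1, fun e h₁ h₂ h₃ => (h e h₁ h₂ h₃).2⟩,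
    fun h e h₁ h₂ h₃ => ⟨h.1 e h₁ h₂ h₃, h.2 e h₁ h₂ h₃⟩⟩

theorem comp_empty (v : Fin N) : comp (∅ : Finset (Fin N × Fin N)) v = {v} := by
  refine Finset.eq_singleton_iff_unique_mem.2 ⟨mem_comp_self _ v, fun w hw => ?_⟩
  by_contra hne
  have := Fin.val_ne_of_ne hne
  exact Finset.notMem_empty _ <| mem_comp.1 hw (⟨min (v : ℕ) w, by omega⟩,
    ⟨min (v : ℕ) w + 1, by omega⟩) rfl le_rfl (by dsimp only; omega)

def CompMonotone (E : Finset (Fin N × Fin N)) (f : Fin N → Fin N) : Prop :=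
  ∀ v, MonotoneOn f (comp E v)

theorem compMonotone_iff {f : Fin N → Fin N} :
    CompMonotone E f ↔ ∀ e ∈ E, (e.2 : ℕ) = e.1 + 1 → f e.1 ≤ f e.2 := by
  refine ⟨fun h e he hsucc => h e.1 (mem_comp_self E e.1) (mem_comp_of_mem he hsucc)
    (Fin.le_def.2 (by omega)), fun h => ?_⟩
  suffices step : ∀ n : ℕ, ∀ a b : Fin N, (b : ℕ) = a + n → b ∈ comp E a → f a ≤ f b by
    intro v a ha b hb hab
    exact step (b - a) a b (by have := Fin.le_def.1 hab; omega)
      (mem_comp_trans (mem_comp_comm.1 ha) hb)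
  intro n
  induction n with
  | zero => intro a b hab _; rw [Fin.ext hab]
  | succ n ih =>
    intro a b hab hb
    let c : Fin N := ⟨a + 1, by omega⟩
    have hc : c ∈ comp E a := mem_comp_of_le_of_le hb (by simp [c]) (by simp [c]; omega)
    exact (h _ (mk_mem_of_mem_comp (mem_comp_self E a) hc rfl) rfl).trans
      (ih c b (by simp [c]; omega) (comp_eq_of_mem hc ▸ hb))

theorem CompMonotone.union {f : Fin N → Fin N} (hD : CompMonotone D f)
    (hD' : CompMonotone D' f) : CompMonotone (D ∪ D') f := by
  rw [compMonotone_iff] at *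
  intro e he
  exact (Finset.mem_union.1 he).elim (hD e) (hD' e)

def youngSubgroup (E : Finset (Fin N × Fin N)) : Subgroup (Equiv.Perm (Fin N)) where
  carrier := {ρ | ∀ i, ρ i ∈ comp E i}
  mul_mem' {ρ τ} hρ hτ i := comp_eq_of_mem (hτ i) ▸ hρ (τ i)
  one_mem' := mem_comp_self E
  inv_mem' {ρ} hρ i := by simpa using mem_comp_comm.1 (hρ (ρ⁻¹ i))

theorem mem_youngSubgroup {ρ : Equiv.Perm (Fin N)} :
    ρ ∈ youngSubgroup E ↔ ∀ i, ρ i ∈ comp E i :=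
  Iff.rfl

theorem youngSubgroup_mono (h : D ⊆ E) : youngSubgroup D ≤ youngSubgroup E :=
  fun _ hρ i => comp_mono h i (hρ i)

theorem youngSubgroup_inter : youngSubgroup (D ∩ D') = youngSubgroup D ⊓ youngSubgroup D' := by
  ext ρ
  simp only [Subgroup.mem_inf, mem_youngSubgroup, comp_inter, Finset.mem_inter, forall_and]

theorem youngSubgroup_empty : youngSubgroup (∅ : Finset (Fin N × Fin N)) = ⊥ :=
  (Subgroup.eq_bot_iff_forall _).2 fun ρ hρ =>
    Equiv.ext fun i => by simpa [comp_empty] using hρ i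

theorem image_comp_of_mem_youngSubgroup {ρ : Equiv.Perm (Fin N)} (hρ : ρ ∈ youngSubgroup E)
    (v : Fin N) : (comp E v).image ρ = comp E v :=
  Finset.eq_of_subset_of_card_le
    (Finset.image_subset_iff.2 fun j hj => comp_eq_of_mem hj ▸ hρ j)
    (Finset.card_image_of_injective _ ρ.injective).ge

theorem swap_mem_youngSubgroup {v a b : Fin N} (ha : a ∈ comp E v) (hb : b ∈ comp E v) :
    Equiv.swap a b ∈ youngSubgroup E := by
  have hab : b ∈ comp E a := mem_comp_trans (mem_comp_comm.1 ha) hb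
  intro i
  rcases eq_or_ne i a with rfl | hia
  · simpa using hab
  rcases eq_or_ne i b with rfl | hib
  · simpa using mem_comp_comm.1 hab
  simpa [Equiv.swap_apply_of_ne_of_ne hia hib] using mem_comp_self E i

theorem rank_lt_length_sort (π : Equiv.Perm (Fin N)) {v i : Fin N} (hi : i ∈ comp E v) :
    #((comp E v).filter (· < i)) < (((comp E v).image π).sort (· ≤ ·)).length := by
  rw [Finset.length_sort, Finset.card_image_of_injective _ π.injective]
  exact Finset.card_lt_card (Finset.filter_ssubset.2 ⟨i, hi, lt_irrefl i⟩)

theorem permG_apply (π : Equiv.Perm (Fin N)) {v i : Fin N} (hi : i ∈ comp E v) :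
    permG E π i = (((comp E v).image π).sort (· ≤ ·))[#((comp E v).filter (· < i))]'
      (rank_lt_length_sort π hi) := by
  rw [permG, comp_eq_of_mem hi, List.getD_eq_getElem]

theorem compMonotone_permG (π : Equiv.Perm (Fin N)) : CompMonotone E (permG E π) :=
  fun _ i hi j hj hij => by
    rw [permG_apply π hi, permG_apply π hj]
    exact (Finset.sortedLT_sort _).sortedLE.getElem_le_getElem_of_le
      (Finset.card_le_card fun x hx => by
        simp only [Finset.mem_filter] at hx ⊢
        exact ⟨hx.1, hx.2.trans_le hij⟩)

theorem permG_mem_image (π : Equiv.Perm (Fin N)) (i : Fin N) :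
    permG E π i ∈ (comp E i).image π := by
  rw [permG_apply π (mem_comp_self E i), ← Finset.mem_sort (· ≤ ·)]
  exact List.getElem_mem _

theorem permG_mul_of_compMonotone {σ ρ : Equiv.Perm (Fin N)} (hσ : CompMonotone E σ)
    (hρ : ρ ∈ youngSubgroup E) : permG E (σ * ρ) = σ := by
  funext i
  have hsort : ((comp E i).image ⇑(σ * ρ)).sort (· ≤ ·)
      = ((comp E i).sort (· ≤ ·)).map σ := by
    rw [Equiv.Perm.coe_mul, ← Finset.image_image, image_comp_of_mem_youngSubgroup hρ]
    simpa [Finset.map_eq_image] using (StrictMonoOn.map_finsetSort σ.toEmbedding _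
      ((hσ i).strictMonoOn_of_injOn σ.injective.injOn)).symm
  simp only [permG_apply _ (mem_comp_self E i), hsort, List.getElem_map]
  rw [Finset.getElem_sort_card_filter_lt (mem_comp_self E i)]

theorem inv_mul_mem_youngSubgroup {π σ : Equiv.Perm (Fin N)} (h : permG E π = σ) :
    σ⁻¹ * π ∈ youngSubgroup E := by
  intro i
  have himage : (comp E i).image σ = (comp E i).image π :=
    Finset.eq_of_subset_of_card_le
      (Finset.image_subset_iff.2 fun j hj => comp_eq_of_mem hj ▸ h ▸ permG_mem_image π j)
      (by rw [Finset.card_image_of_injective _ π.injective,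
        Finset.card_image_of_injective _ σ.injective])
  obtain ⟨c, hc, hσc⟩ := Finset.mem_image.1 (himage ▸ Finset.mem_image_of_mem π (mem_comp_self E i))
  simpa [← hσc] using hc

def permGFiberEquiv {σ : Equiv.Perm (Fin N)} (hσ : CompMonotone E σ) :
    {π : Equiv.Perm (Fin N) // permG E π = σ} ≃ youngSubgroup E where
  toFun π := ⟨σ⁻¹ * π, inv_mul_mem_youngSubgroup π.2⟩
  invFun ρ := ⟨σ * ρ, permG_mul_of_compMonotone hσ ρ.2⟩
  left_inv π := Subtype.ext (mul_inv_cancel_left σ π)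
  right_inv ρ := Subtype.ext (inv_mul_cancel_left σ ρ)

open scoped Classical in
theorem fG_eq (σ : Equiv.Perm (Fin N)) :
    fG E σ = if CompMonotone E σ then (Nat.card (youngSubgroup E) : ℝ) else 0 := by
  split_ifs with hσ
  · rw [fG, ← Fintype.card_subtype, ← Nat.card_eq_fintype_card, Nat.card_congr (permGFiberEquiv hσ)]
  · rw [fG, Finset.card_eq_zero.2 (Finset.filter_eq_empty_iff.2 fun π _ (h : permG E π = σ) =>
      hσ (h ▸ compMonotone_permG π)), Nat.cast_zero]

theorem sum_fG_le (E : Finset (Fin N × Fin N)) : ∑ σ, fG E σ ≤ N.factorial := by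
  classical
  let coeEmb : Equiv.Perm (Fin N) ↪ (Fin N → Fin N) := ⟨(⇑), DFunLike.coe_injective⟩
  have hfibers : ∑ σ : Equiv.Perm (Fin N), #{π | permG E π = ⇑σ} ≤ N.factorial :=
    calc ∑ σ : Equiv.Perm (Fin N), #{π | permG E π = ⇑σ}
          = ∑ g ∈ univ.map coeEmb, #{π | permG E π = g} := by rw [Finset.sum_map]; rfl
      _ ≤ ∑ g, #{π | permG E π = g} := Finset.sum_le_sum_of_subset (Finset.subset_univ _)
      _ = N.factorial := by
          rw [← Finset.card_eq_sum_card_fiberwise (by simp)]; simp [Fintype.card_perm]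
  simpa [fG] using (Nat.cast_le (α := ℝ)).2 hfibers

theorem fG_mul_fG_le (σ : Equiv.Perm (Fin N)) :
    fG D σ * fG D' σ ≤ fG (D ∪ D') σ * Nat.card (youngSubgroup (D ∩ D')) := by
  rw [fG_eq, fG_eq, fG_eq, ite_zero_mul_ite_zero]
  split_ifs with h h'
  · rw [youngSubgroup_inter]
    exact_mod_cast Subgroup.card_mul_card_le_card_mul_card_inf
      (youngSubgroup_mono Finset.subset_union_left) (youngSubgroup_mono Finset.subset_union_right)
  · exact absurd (h.1.union h.2) h'
  all_goals positivity

theorem card_comp_le_of_LSparse {L : ℕ} (hL : 2 ≤ L) (hsp : LSparse L D) (v : Fin N) :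
    #(comp D v) ≤ L := by
  set C := comp D v
  have hne : C.Nonempty := ⟨v, mem_comp_self D v⟩
  set m := C.min' hne
  set M := C.max' hne
  have hmM : (m : ℕ) ≤ M := Fin.le_def.1 (C.min'_le _ (C.max'_mem hne))
  have hMm : M ∈ comp D m := mem_comp_trans (mem_comp_comm.1 (C.min'_mem hne)) (C.max'_mem hne)
  by_contra! hC
  have hspan : L ≤ (M : ℕ) - m := by
    have : #C ≤ #(Finset.Icc m M) :=
      Finset.card_le_card fun x hx => Finset.mem_Icc.2 ⟨C.min'_le x hx, C.le_max' x hx⟩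
    rw [Fin.card_Icc] at this
    omega
  -- the component covers the whole window starting at `m`, which thus contains `L - 1` edges
  have hedges : L - 1 ≤ #(D.filter fun e => (m : ℕ) ≤ e.1 ∧ (e.2 : ℕ) ≤ m + L - 1) :=
    calc L - 1 = #(Finset.Ico (m : ℕ) (m + L - 1)) := by simp only [Nat.card_Ico]; omega
      _ ≤ #((D.filter fun e => (m : ℕ) ≤ e.1 ∧ (e.2 : ℕ) ≤ m + L - 1).image fun e => (e.1 : ℕ)) :=
          Finset.card_le_card fun k hk => by
            have hk := Finset.mem_Ico.1 hk
            have hN := M.isLt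
            let e : Fin N × Fin N := (⟨k, by omega⟩, ⟨k + 1, by omega⟩)
            have he : e ∈ D := mem_comp.1 hMm e rfl (by dsimp only [e]; omega)
              (by dsimp only [e]; omega)
            exact Finset.mem_image.2
              ⟨e, Finset.mem_filter.2 ⟨he, by dsimp only [e]; omega⟩, rfl⟩
      _ ≤ _ := Finset.card_image_le
  have hwindow : ((L - 1 : ℕ) : ℝ) ≤ L / 3 := (Nat.cast_le.2 hedges).trans (hsp m)
  have hL' : (2 : ℝ) ≤ L := by exact_mod_cast hL
  rw [Nat.cast_sub (by omega), Nat.cast_one] at hwindow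
  linarith

section MaxEdge

variable {S : Finset (Fin N × Fin N)} {e : Fin N × Fin N}

theorem le_of_mem_comp_insert (hS : ∀ x ∈ S, x.1 ≤ e.1) (he : (e.2 : ℕ) = e.1 + 1) {c : Fin N}
    (hc : c ∈ comp (insert e S) e.2) : c ≤ e.2 := by
  by_contra! h
  have h' := Fin.lt_def.1 h
  let d : Fin N := ⟨e.2 + 1, by omega⟩
  have hd : d ∈ comp (insert e S) e.2 := mem_comp_of_le_of_le hc (by simp [d]) (by simp [d]; omega)
  rcases Finset.mem_insert.1 (mk_mem_of_mem_comp (mem_comp_self _ _) hd rfl) with h | h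
  · have := congrArg (fun x : Fin N × Fin N => (x.1 : ℕ)) h
    simp only at this
    omega
  · have := Fin.le_def.1 (hS _ h)
    simp only at this
    omega

theorem mem_youngSubgroup_of_apply_eq (hS : ∀ x ∈ S, x.1 ≤ e.1) (he : (e.2 : ℕ) = e.1 + 1)
    {τ : Equiv.Perm (Fin N)} (hτ : τ ∈ youngSubgroup (insert e S)) (hfix : τ e.2 = e.2) :
    τ ∈ youngSubgroup S := by
  intro j
  by_cases hj : j = e.2
  · subst hj
    rw [hfix]
    exact mem_comp_self S _
  have hτj : τ j ≠ e.2 := fun h => hj (τ.injective (h.trans hfix.symm))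
  refine mem_comp.2 fun f hf hmin hmax => ?_
  rcases Finset.mem_insert.1 (mem_comp.1 (hτ j) f hf hmin hmax) with rfl | h
  · -- `f.2` is the largest vertex of its component, which contains `j` and `τ j`
    have hmid : f.2 ∈ comp (insert f S) j := mem_comp_of_le_of_le (hτ j) (by omega) hmax
    have h₁ := Fin.le_def.1 (le_of_mem_comp_insert hS he (mem_comp_comm.1 hmid))
    have h₂ := Fin.le_def.1 (le_of_mem_comp_insert hS he
      (mem_comp_trans (mem_comp_comm.1 hmid) (hτ j)))
    have := Fin.val_ne_of_ne hj
    have := Fin.val_ne_of_ne hτj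
    omega
  · exact h

theorem card_youngSubgroup_insert_le (hS : ∀ x ∈ S, x.1 ≤ e.1) (he : (e.2 : ℕ) = e.1 + 1) :
    Nat.card (youngSubgroup (insert e S)) ≤
      #(comp (insert e S) e.2) * Nat.card (youngSubgroup S) := by
  let v := e.2
  let F : youngSubgroup (insert e S) → comp (insert e S) v × youngSubgroup S := fun ρ =>
    (⟨ρ.1 v, ρ.2 v⟩, ⟨Equiv.swap (ρ.1 v) v * ρ, mem_youngSubgroup_of_apply_eq hS he
      (mul_mem (swap_mem_youngSubgroup (ρ.2 v) (mem_comp_self _ v)) ρ.2)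
      (Equiv.swap_apply_left _ _)⟩)
  have hF : Function.Injective F := fun ρ ρ' h => by
    simp only [F, Prod.mk.injEq, Subtype.mk.injEq] at h
    rw [h.1] at h
    exact Subtype.ext (mul_left_cancel h.2)
  simpa [Nat.card_prod, Nat.card_eq_finsetCard] using Nat.card_le_card_of_injective F hF

end MaxEdge

theorem card_youngSubgroup_le_pow {B : ℕ} (hB : ∀ v, #(comp E v) ≤ B) :
    Nat.card (youngSubgroup E) ≤ B ^ #E := by
  revert hB
  refine Finset.induction_on_max_value (fun e : Fin N × Fin N => e.1) E
    (fun _ => by simp [youngSubgroup_empty]) fun e S heS hS ih hB => ?_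
  have hBS : ∀ v, #(comp S v) ≤ B := fun v =>
    (Finset.card_le_card (comp_mono (Finset.subset_insert e S) v)).trans (hB v)
  rw [Finset.card_insert_of_notMem heS, pow_succ']
  by_cases he : (e.2 : ℕ) = e.1 + 1
  · exact (card_youngSubgroup_insert_le hS he).trans (Nat.mul_le_mul (hB _) (ih hBS))
  have hcomp : ∀ v, comp (insert e S) v = comp S v := fun v => by
    ext w
    simp only [mem_comp, Finset.mem_insert]
    exact forall_congr' fun f => imp_congr_right fun hf =>
      by simp only [or_iff_right (fun h : f = e => he (h ▸ hf))]
  have hBpos : 0 < B := (Finset.card_pos.2 ⟨_, mem_comp_self _ e.1⟩).trans_le (hB e.1)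
  calc Nat.card (youngSubgroup (insert e S)) = Nat.card (youngSubgroup S) := by
        simp only [youngSubgroup, hcomp]
    _ ≤ B ^ #S := ih hBS
    _ ≤ B * B ^ #S := Nat.le_mul_of_pos_left _ hBpos

theorem fGG_le_pow_of_LSparse_general (N L : ℕ) (hL : 10 ≤ L) (D D' : Finset (Fin N × Fin N))
    (hsp : LSparse L D) :
    fGG D D' ≤ (Nat.factorial L : ℝ) ^ ((D ∩ D').card) := by
  have hY : (Nat.card (youngSubgroup (D ∩ D')) : ℝ) ≤ (Nat.factorial L : ℝ) ^ #(D ∩ D') := by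
    have hcomp : ∀ v, #(comp (D ∩ D') v) ≤ L := fun v =>
      (Finset.card_le_card (comp_mono Finset.inter_subset_left v)).trans
        (card_comp_le_of_LSparse (by omega) hsp v)
    exact_mod_cast (card_youngSubgroup_le_pow hcomp).trans
      (Nat.pow_le_pow_left (Nat.self_le_factorial L) _)
  calc fGG D D'
      ≤ (∑ σ, fG (D ∪ D') σ * Nat.card (youngSubgroup (D ∩ D'))) / N.factorial := by
        unfold fGG
        gcongr ?_ / _
        exact Finset.sum_le_sum fun σ _ => fG_mul_fG_le σ
    _ ≤ N.factorial * Nat.card (youngSubgroup (D ∩ D')) / N.factorial := by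
        rw [← Finset.sum_mul]
        gcongr
        exact sum_fG_le _
    _ = Nat.card (youngSubgroup (D ∩ D')) := by field_simp
    _ ≤ _ := hY

/-- **Lemma (exponential bound)**: if `G` and `G'` are `L`-sparse shuffle graphs then
`f_{G,G'} ≤ (L!)^{|E(G,G')|}`. -/
theorem fGG_le_pow_of_LSparse (N L : ℕ) (hL : 10 ≤ L) (D D' : Finset (Fin N × Fin N))
    (hD : ∀ e ∈ D, (e.2 : ℕ) = (e.1 : ℕ) + 1)
    (hD' : ∀ e ∈ D', (e.2 : ℕ) = (e.1 : ℕ) + 1)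
    (hsp : LSparse L D) (hsp' : LSparse L D') :
    fGG D D' ≤ (Nat.factorial L : ℝ) ^ ((D ∩ D').card) :=
  fGG_le_pow_of_LSparse_general N L hL D D' hsp

end RiffleShuffle
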